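/- arXiv:2502.21307 — 3 statements merged into one kernel-verified Lean document; each statement's English description precedes it below -/
import Mathlib

section
/- Let X be a complete lattice equipped with a compact topology such that whenever x ≰ y there is a clopen filter F with x ∈ F and y ∉ F. Then X is an algebraic lattice (every element of X is the supremum of the compact elements below it) and the topology of X coincides with the Lawson topology. -/
set_option linter.unusedSectionVars false


/-- A filter of a partially ordered set with finite meets:
a nonempty upper set closed under binary meets. -/
def IsFilterSet {X : Type*} [SemilatticeInf X] (F : Set X) : Prop :=
  F.Nonempty ∧ IsUpperSet F ∧ ∀ x ∈ F, ∀ y ∈ F, x ⊓ y ∈ F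

/-- A Scott-open subset of a complete lattice: an upper set `U` such that whenever the
supremum of a (nonempty) directed set belongs to `U`, the directed set meets `U`. -/
def ScottOpen {X : Type*} [CompleteLattice X] (U : Set X) : Prop :=
  IsUpperSet U ∧
    ∀ S : Set X, S.Nonempty → DirectedOn (· ≤ ·) S → sSup S ∈ U → (S ∩ U).Nonempty

/-- The Lawson topology on a complete lattice: the topology generated by the Scott-open
sets together with the complements of principal upsets `↑x`. -/
def lawsonTop (X : Type*) [CompleteLattice X] : TopologicalSpace X :=
  TopologicalSpace.generateFrom
    ({U : Set X | ScottOpen U} ∪ {S : Set X | ∃ x : X, S = (Set.Ici x)ᶜ})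

section Aux

open CompleteLattice

variable {X : Type*} [CompleteLattice X]

/-- `⊥` is a compact element. -/
lemma aux_bot_compact : IsCompactElement (⊥ : X) := fun _ _ hne _ _ _ =>
  ⟨hne.some, hne.some_mem, bot_le⟩

/-- The sup of two compact elements is compact. -/
lemma aux_sup_compact {a b : X} (ha : IsCompactElement a) (hb : IsCompactElement b) :
    IsCompactElement (a ⊔ b) := by
  classical
  have h := CompleteLattice.isCompactElement_finsetSup (f := (id : X → X)) ({a, b} : Finset X)
    (by
      intro x hx
      rcases Finset.mem_insert.1 hx with h | h
      · rwa [h]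
      · rw [Finset.mem_singleton.1 h]; exact hb)
  simpa using h

/-- `Ici k` is Scott open when `k` is compact. -/
lemma aux_scottOpen_Ici {k : X} (hk : IsCompactElement k) : ScottOpen (Set.Ici k) := by
  refine ⟨isUpperSet_Ici k, fun S hne hdir hmem => ?_⟩
  obtain ⟨s, hs, hks⟩ :=
    (CompleteLattice.isCompactElement_iff_le_of_directed_sSup_le X k).1 hk S hne hdir hmem
  exact ⟨s, hs, hks⟩

variable [TopologicalSpace X] [CompactSpace X]
variable (hsep : ∀ x y : X, ¬x ≤ y → ∃ F : Set X, IsClopen F ∧ IsFilterSet F ∧ x ∈ F ∧ y ∉ F)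

include hsep

/-- `Ici x` is the intersection of the clopen filters containing `x`. -/
lemma aux_Ici_eq (x : X) :
    Set.Ici x = ⋂₀ {F : Set X | IsClopen F ∧ IsFilterSet F ∧ x ∈ F} := by
  ext z
  simp only [Set.mem_Ici, Set.mem_sInter, Set.mem_setOf_eq]
  constructor
  · rintro hz F ⟨_, hfil, hxF⟩
    exact hfil.2.1 hz hxF
  · intro hz
    by_contra hxz
    obtain ⟨F, hcl, hfil, hxF, hzF⟩ := hsep x z hxz
    exact hzF (hz F ⟨hcl, hfil, hxF⟩)

lemma aux_closed_Ici (x : X) : IsClosed (Set.Ici x) := by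
  rw [aux_Ici_eq hsep x]
  exact isClosed_sInter fun F hF => hF.1.1

lemma aux_closed_Iic (y : X) : IsClosed (Set.Iic y) := by
  rw [← isOpen_compl_iff]
  have : (Set.Iic y)ᶜ = ⋃₀ {F : Set X | IsClopen F ∧ IsFilterSet F ∧ y ∉ F} := by
    ext z
    simp only [Set.mem_compl_iff, Set.mem_Iic, Set.mem_sUnion, Set.mem_setOf_eq]
    constructor
    · intro hzy
      obtain ⟨F, hcl, hfil, hzF, hyF⟩ := hsep z y hzy
      exact ⟨F, ⟨hcl, hfil, hyF⟩, hzF⟩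
    · rintro ⟨F, ⟨_, hfil, hyF⟩, hzF⟩ hle
      exact hyF (hfil.2.1 hle hzF)
  rw [this]
  exact isOpen_sUnion fun F hF => hF.1.2

/-- The sup of a nonempty directed set lies in its closure. -/
lemma aux_sSup_mem_closure {D : Set X} (hne : D.Nonempty) (hdir : DirectedOn (· ≤ ·) D) :
    sSup D ∈ closure D := by
  haveI : Nonempty D := hne.to_subtype
  set f : D → Filter X := fun d => Filter.principal (D ∩ Set.Ici d.1) with hf
  have hdirf : Directed (· ≥ ·) f := by
    rintro ⟨a, ha⟩ ⟨b, hb⟩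
    obtain ⟨c, hc, hac, hbc⟩ := hdir a ha b hb
    refine ⟨⟨c, hc⟩, ?_, ?_⟩
    · exact Filter.principal_mono.2 fun z hz => ⟨hz.1, hac.trans hz.2⟩
    · exact Filter.principal_mono.2 fun z hz => ⟨hz.1, hbc.trans hz.2⟩
  haveI : Filter.NeBot (⨅ d, f d) :=
    Filter.iInf_neBot_of_directed' hdirf fun d =>
      Filter.principal_neBot_iff.2 ⟨d.1, d.2, le_refl _⟩
  obtain ⟨p, hp⟩ := exists_clusterPt_of_compactSpace (⨅ d, f d)
  have hmem : ∀ d : D, p ∈ closure (D ∩ Set.Ici d.1) := by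
    intro d
    have h1 : ClusterPt p (f d) := hp.mono (iInf_le f d)
    rwa [mem_closure_iff_clusterPt]
  have hub : ∀ d ∈ D, d ≤ p := by
    intro d hd
    have h1 := hmem ⟨d, hd⟩
    have h2 : closure (D ∩ Set.Ici d) ⊆ Set.Ici d :=
      closure_minimal Set.inter_subset_right (aux_closed_Ici hsep d)
    exact h2 h1
  have hlep : p ≤ sSup D := by
    obtain ⟨d, hd⟩ := hne
    have h1 := hmem ⟨d, hd⟩
    have h2 : closure (D ∩ Set.Ici d) ⊆ Set.Iic (sSup D) :=
      closure_minimal (fun z hz => le_sSup hz.1) (aux_closed_Iic hsep _)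
    exact h2 h1
  have hpe : p = sSup D := le_antisymm hlep (sSup_le hub)
  obtain ⟨d, hd⟩ := hne
  have h1 := hmem ⟨d, hd⟩
  have h2 : closure (D ∩ Set.Ici d) ⊆ closure D := closure_mono Set.inter_subset_left
  rw [← hpe]
  exact h2 h1

/-- Every open upper set is Scott open. -/
lemma aux_open_upper_scott {U : Set X} (ho : IsOpen U) (hu : IsUpperSet U) :
    ScottOpen U := by
  refine ⟨hu, fun S hne hdir hmem => ?_⟩
  obtain ⟨z, hzU, hzS⟩ :=
    (mem_closure_iff.1 (aux_sSup_mem_closure hsep hne hdir)) U ho hmem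
  exact ⟨z, hzS, hzU⟩

/-- A clopen filter is the principal upset of a compact element. -/
lemma aux_clopen_filter_min {F : Set X} (hcl : IsClopen F) (hfil : IsFilterSet F) :
    ∃ m, F = Set.Ici m ∧ IsCompactElement m := by
  obtain ⟨hne, hup, hmeet⟩ := hfil
  haveI : Nonempty F := hne.to_subtype
  have key : (⋂ a : F, F ∩ Set.Iic a.1).Nonempty := by
    apply IsCompact.nonempty_iInter_of_directed_nonempty_isCompact_isClosed
    · rintro ⟨a, ha⟩ ⟨b, hb⟩
      refine ⟨⟨a ⊓ b, hmeet a ha b hb⟩, ?_, ?_⟩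
      · exact fun z hz => ⟨hz.1, hz.2.trans inf_le_left⟩
      · exact fun z hz => ⟨hz.1, hz.2.trans inf_le_right⟩
    · exact fun a => ⟨a.1, a.2, le_refl _⟩
    · exact fun a => (hcl.1.inter (aux_closed_Iic hsep _)).isCompact
    · exact fun a => hcl.1.inter (aux_closed_Iic hsep _)
  obtain ⟨m, hm⟩ := key
  simp only [Set.mem_iInter] at hm
  obtain ⟨a₀, ha₀⟩ := hne
  have hmF : m ∈ F := (hm ⟨a₀, ha₀⟩).1
  have hmin : ∀ a ∈ F, m ≤ a := fun a ha => (hm ⟨a, ha⟩).2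
  have hFI : F = Set.Ici m :=
    Set.Subset.antisymm (fun a ha => hmin a ha) (fun a ha => hup ha hmF)
  refine ⟨m, hFI, ?_⟩
  rw [CompleteLattice.isCompactElement_iff_le_of_directed_sSup_le]
  intro S hSne hSdir hle
  have hscott := aux_open_upper_scott hsep hcl.2 hup
  have hsS : sSup S ∈ F := hup hle hmF
  obtain ⟨s, hsSmem, hsF⟩ := hscott.2 S hSne hSdir hsS
  exact ⟨s, hsSmem, hmin s hsF⟩

/-- Algebraicity. -/
lemma aux_algebraic (x : X) :
    x = sSup {k : X | IsCompactElement k ∧ k ≤ x} := by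
  set s := sSup {k : X | IsCompactElement k ∧ k ≤ x} with hs
  have h1 : s ≤ x := sSup_le fun k hk => hk.2
  refine le_antisymm ?_ h1
  by_contra hxs
  obtain ⟨F, hcl, hfil, hxF, hsF⟩ := hsep x s hxs
  obtain ⟨m, hFI, hmc⟩ := aux_clopen_filter_min hsep hcl hfil
  have hmx : m ≤ x := by rw [hFI] at hxF; exact hxF
  have hms : m ≤ s := le_sSup ⟨hmc, hmx⟩
  exact hsF (by rw [hFI]; exact hms)

/-- For a compact element `k`, the set `Ici k` is clopen. -/
lemma aux_Ici_clopen {k : X} (hk : IsCompactElement k) : IsClopen (Set.Ici k) := by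
  set C := {F : Set X | IsClopen F ∧ IsFilterSet F ∧ k ∈ F} with hC
  rcases C.eq_empty_or_nonempty with hCe | hCne
  · have h1 : Set.Ici k = Set.univ := by
      rw [aux_Ici_eq hsep k, ← hC, hCe, Set.sInter_empty]
    rw [h1]; exact isClopen_univ
  · set M := {m : X | Set.Ici m ∈ C} with hM
    have hmk : ∀ m ∈ M, m ≤ k := fun m hm => hm.2.2
    have hCmin : ∀ F ∈ C, ∃ m ∈ M, F = Set.Ici m := by
      intro F hF
      obtain ⟨m, hFI, _⟩ := aux_clopen_filter_min hsep hF.1 hF.2.1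
      refine ⟨m, ?_, hFI⟩
      rw [hM, Set.mem_setOf_eq, ← hFI]
      exact hF
    have hMne : M.Nonempty := by
      obtain ⟨F, hF⟩ := hCne
      obtain ⟨m, hm, _⟩ := hCmin F hF
      exact ⟨m, hm⟩
    have hMdir : DirectedOn (· ≤ ·) M := by
      intro a ha b hb
      have hFab : Set.Ici a ∩ Set.Ici b ∈ C := by
        refine ⟨ha.1.inter hb.1, ⟨⟨a ⊔ b, le_sup_left, le_sup_right⟩, ?_, ?_⟩,
          ha.2.2, hb.2.2⟩
        · exact fun u v huv hu => ⟨hu.1.trans huv, hu.2.trans huv⟩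
        · exact fun u hu v hv => ⟨le_inf hu.1 hv.1, le_inf hu.2 hv.2⟩
      obtain ⟨m, hmM, hFI⟩ := hCmin _ hFab
      have hmmem : m ∈ Set.Ici a ∩ Set.Ici b := by rw [hFI]; exact Set.self_mem_Ici
      exact ⟨m, hmM, hmmem.1, hmmem.2⟩
    have hksup : k ≤ sSup M := by
      have hmem : sSup M ∈ Set.Ici k := by
        rw [aux_Ici_eq hsep k]
        intro F hF
        obtain ⟨m, hmM, hFI⟩ := hCmin F hF
        rw [hFI]
        exact le_sSup hmM
      exact hmem
    obtain ⟨m, hmM, hkm⟩ :=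
      (CompleteLattice.isCompactElement_iff_le_of_directed_sSup_le X k).1 hk M hMne hMdir hksup
    have hkem : k = m := le_antisymm hkm (hmk m hmM)
    rw [hkem]
    exact hmM.1

/-- Every Scott-open set is open in the ambient topology. -/
lemma aux_scottOpen_isOpen {U : Set X} (hU : ScottOpen U) : IsOpen U := by
  have hrw : U = ⋃ k ∈ {k : X | IsCompactElement k ∧ k ∈ U}, Set.Ici k := by
    ext x
    simp only [Set.mem_iUnion, Set.mem_setOf_eq, Set.mem_Ici, exists_prop]
    constructor
    · intro hx
      set K := {k : X | IsCompactElement k ∧ k ≤ x} with hK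
      have hKne : K.Nonempty := ⟨⊥, aux_bot_compact, bot_le⟩
      have hKdir : DirectedOn (· ≤ ·) K := by
        intro a ha b hb
        exact ⟨a ⊔ b, ⟨aux_sup_compact ha.1 hb.1, sup_le ha.2 hb.2⟩, le_sup_left, le_sup_right⟩
      have hmem : sSup K ∈ U := by rw [← aux_algebraic hsep x]; exact hx
      obtain ⟨j, hjK, hjU⟩ := hU.2 K hKne hKdir hmem
      exact ⟨j, ⟨hjK.1, hjU⟩, hjK.2⟩
    · rintro ⟨j, ⟨hjc, hjU⟩, hjx⟩
      exact hU.1 hjx hjU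
  rw [hrw]
  exact isOpen_biUnion fun j hj => (aux_Ici_clopen hsep hj.1).2

end Aux

/-- The Lawson topology is Hausdorff when the lattice is algebraic. -/
lemma lawson_t2 {X : Type*} [CompleteLattice X]
    (halg : ∀ x : X, x = sSup {k : X | IsCompactElement k ∧ k ≤ x}) :
    @T2Space X (lawsonTop X) := by
  letI := lawsonTop X
  have key : ∀ x y : X, ¬x ≤ y →
      ∃ u v : Set X, IsOpen u ∧ IsOpen v ∧ x ∈ u ∧ y ∈ v ∧ Disjoint u v := by
    intro x y hxy
    have hk : ∃ k : X, IsCompactElement k ∧ k ≤ x ∧ ¬k ≤ y := by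
      by_contra h
      push_neg at h
      apply hxy
      calc x = sSup {k : X | IsCompactElement k ∧ k ≤ x} := halg x
        _ ≤ y := sSup_le fun k hkk => h k hkk.1 hkk.2
    obtain ⟨k, hkc, hkx, hky⟩ := hk
    refine ⟨Set.Ici k, (Set.Ici k)ᶜ, ?_, ?_, hkx, hky, disjoint_compl_right⟩
    · exact TopologicalSpace.isOpen_generateFrom_of_mem (Or.inl (aux_scottOpen_Ici hkc))
    · exact TopologicalSpace.isOpen_generateFrom_of_mem (Or.inr ⟨k, rfl⟩)
  constructor
  intro x y hxy
  have h : ¬x ≤ y ∨ ¬y ≤ x := by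
    by_contra h
    push_neg at h
    exact hxy (le_antisymm h.1 h.2)
  rcases h with h | h
  · exact key x y h
  · obtain ⟨u, v, hu, hv, hyu, hxv, hd⟩ := key y x h
    exact ⟨v, u, hv, hu, hxv, hyu, hd.symm⟩

/-- If a complete lattice carries a compact topology in which `x ≰ y` are
separated by clopen filters, then the lattice is algebraic and the topology is the
Lawson topology. -/
theorem statement_3 {X : Type*} [t : TopologicalSpace X] [CompactSpace X]
    [CompleteLattice X]
    (hsep : ∀ x y : X, ¬x ≤ y →
      ∃ F : Set X, IsClopen F ∧ IsFilterSet F ∧ x ∈ F ∧ y ∉ F) :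
    (∀ x : X, x = sSup {k : X | (∀ s : Set X, k ≤ sSup s → ∃ t : Finset X, ↑t ⊆ s ∧ k ≤ t.sup id) ∧ k ≤ x}) ∧
      t = lawsonTop X := by
  refine ⟨fun x => ?_, ?_⟩
  · have e : {k : X | (∀ s : Set X, k ≤ sSup s → ∃ t : Finset X, ↑t ⊆ s ∧ k ≤ t.sup id) ∧ k ≤ x}
        = {k : X | IsCompactElement k ∧ k ≤ x} := by
      ext k
      simp only [Set.mem_setOf_eq, CompleteLattice.isCompactElement_iff_exists_le_sSup_of_le_sSup]
    rw [e]; exact aux_algebraic hsep x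
  have h1 : t ≤ lawsonTop X := by
    apply le_generateFrom
    rintro U (hU | ⟨x, rfl⟩)
    · exact aux_scottOpen_isOpen hsep hU
    · exact (aux_closed_Ici hsep x).isOpen_compl
  have ht2 : @T2Space X (lawsonTop X) := lawson_t2 (aux_algebraic hsep)
  have h2 : lawsonTop X ≤ t := by
    rw [TopologicalSpace.le_def]
    intro U hU
    have hU' : IsOpen U := hU
    have hcl : IsClosed Uᶜ := isClosed_compl_iff.2 hU'
    have hcp : IsCompact Uᶜ := hcl.isCompact
    have hcp' : @IsCompact X (lawsonTop X) Uᶜ := by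
      have h3 : @IsCompact X (lawsonTop X) (id '' Uᶜ) :=
        @IsCompact.image X X t (lawsonTop X) Uᶜ id hcp (continuous_id_of_le h1)
      rwa [Set.image_id] at h3
    have h4 : @IsClosed X (lawsonTop X) Uᶜ := @IsCompact.isClosed X (lawsonTop X) ht2 _ hcp'
    exact (@isClosed_compl_iff X (lawsonTop X) U).1 h4
  exact le_antisymm h1 h2
end

section
/- Let X and Y be algebraic lattices, each equipped with its Lawson topology, and let R ⊆ X × Y be a DH-relation. Then: (1) for every open filter W of X there exists y ∈ Y with W = X ∖ R⁻¹[y]; (2) the map ν sending y ∈ Y to X ∖ R⁻¹[y] is an order isomorphism from Y onto the poset of open filters of X ordered by inclusion, i.e. ν is a bijection onto the set of open filters of X and y ≤ y' ⟺ ν(y) ⊆ ν(y'). -/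
/-- The image `R[A] = {y : ∃ x ∈ A, x R y}` of a set under a relation. -/
def relImage {X Y : Type*} (R : X → Y → Prop) (A : Set X) : Set Y :=
  {y | ∃ x ∈ A, R x y}

/-- The preimage `R⁻¹[B] = {x : ∃ y ∈ B, x R y}` of a set under a relation. -/
def relPreimage {X Y : Type*} (R : X → Y → Prop) (B : Set Y) : Set X :=
  {x | ∃ y ∈ B, R x y}

/-- The compact elements of a complete lattice, with the definition of the older Mathlib. -/
def CompleteLattice.IsCompactElement {α : Type*} [CompleteLattice α] (k : α) :=
  ∀ s : Set α, k ≤ sSup s → ∃ t : Finset α, ↑t ⊆ s ∧ k ≤ t.sup id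

/-- A DH-relation between complete lattices `X` and `Y` carrying topologies `tX`, `tY`:
`R` is interior, the complements `(R[x])ᶜ` and `(R⁻¹[y])ᶜ` are filters, and
`R[x] ⊆ R[x'] → x' ≤ x`, `R⁻¹[y] ⊆ R⁻¹[y'] → y' ≤ y`. -/
def IsDHRel {X Y : Type*} [CompleteLattice X] [CompleteLattice Y]
    (tX : TopologicalSpace X) (tY : TopologicalSpace Y) (R : X → Y → Prop) : Prop :=
  (∀ x : X, @IsClosed Y tY {y | R x y}) ∧
  (∀ U : Set X, @IsClopen X tX U → @IsClopen Y tY (relImage R U)) ∧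
  (∀ y : Y, @IsClosed X tX {x | R x y}) ∧
  (∀ V : Set Y, @IsClopen Y tY V → @IsClopen X tX (relPreimage R V)) ∧
  (∀ x : X, IsFilterSet {y | R x y}ᶜ) ∧
  (∀ y : Y, IsFilterSet {x | R x y}ᶜ) ∧
  (∀ x x' : X, {y | R x y} ⊆ {y | R x' y} → x' ≤ x) ∧
  (∀ y y' : Y, {x | R x y} ⊆ {x | R x y'} → y' ≤ y)

open Set TopologicalSpace

section Aux

variable {X : Type*} [CompleteLattice X]

lemma lawsonTop_eq : lawsonTop X = TopologicalSpace.generateFrom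
    ({U : Set X | ScottOpen U} ∪ {S : Set X | ∃ x : X, S = (Set.Ici x)ᶜ}) := rfl

lemma scottOpen_isOpen {U : Set X} (h : ScottOpen U) : @IsOpen X (lawsonTop X) U :=
  TopologicalSpace.isOpen_generateFrom_of_mem (Or.inl h)

lemma ici_compl_isOpen (x : X) : @IsOpen X (lawsonTop X) (Set.Ici x)ᶜ :=
  TopologicalSpace.isOpen_generateFrom_of_mem (Or.inr ⟨x, rfl⟩)

lemma bot_isCompactElement : CompleteLattice.IsCompactElement (⊥ : X) := by
  intro s _
  exact ⟨∅, by simp⟩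

lemma sup_isCompactElement {a b : X} (ha : CompleteLattice.IsCompactElement a)
    (hb : CompleteLattice.IsCompactElement b) :
    CompleteLattice.IsCompactElement (a ⊔ b) := by
  intro s hs
  obtain ⟨t1, ht1, h1⟩ := ha s (le_trans le_sup_left hs)
  obtain ⟨t2, ht2, h2⟩ := hb s (le_trans le_sup_right hs)
  classical
  refine ⟨t1 ∪ t2, ?_, ?_⟩
  · rw [Finset.coe_union]
    exact Set.union_subset ht1 ht2
  · exact sup_le (h1.trans (Finset.sup_mono Finset.subset_union_left))
      (h2.trans (Finset.sup_mono Finset.subset_union_right))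

lemma scottOpen_Ici {k : X} (hk : CompleteLattice.IsCompactElement k) :
    ScottOpen (Set.Ici k) := by
  refine ⟨fun a b hab ha => le_trans ha hab, fun S hne hdir hsup => ?_⟩
  obtain ⟨x, hx, hkx⟩ :=
    (CompleteLattice.isCompactElement_iff_le_of_directed_sSup_le X k).mp
      ((CompleteLattice.isCompactElement_iff_exists_le_sSup_of_le_sSup X k).mpr hk) S hne hdir hsup
  exact ⟨x, hx, hkx⟩

lemma ici_clopen {k : X} (hk : CompleteLattice.IsCompactElement k) :
    @IsClopen X (lawsonTop X) (Set.Ici k) := by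
  letI := lawsonTop X
  exact ⟨isOpen_compl_iff.mp (ici_compl_isOpen k), scottOpen_isOpen (scottOpen_Ici hk)⟩

/-- The Lawson topology on a complete lattice is compact. -/
lemma lawson_isCompact_univ : @IsCompact X (lawsonTop X) Set.univ := by
  letI := lawsonTop X
  rw [isCompact_iff_ultrafilter_le_nhds]
  intro f _
  set D : Set X := sInf '' {A : Set X | A ∈ f} with hD
  set x0 : X := sSup D with hx0
  refine ⟨x0, mem_univ _, ?_⟩
  rw [lawsonTop_eq, TopologicalSpace.nhds_generateFrom]
  refine le_iInf₂ fun s hs => Filter.le_principal_iff.mpr ?_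
  obtain ⟨hx0s, hsg⟩ := hs
  rcases hsg with hscott | ⟨a, rfl⟩
  · have hne : D.Nonempty := ⟨sInf Set.univ, ⟨Set.univ, f.univ_sets, rfl⟩⟩
    have hdir : DirectedOn (· ≤ ·) D := by
      rintro _ ⟨A, hA, rfl⟩ _ ⟨B, hB, rfl⟩
      exact ⟨sInf (A ∩ B), ⟨A ∩ B, f.inter_sets hA hB, rfl⟩,
        sInf_le_sInf Set.inter_subset_left, sInf_le_sInf Set.inter_subset_right⟩
    obtain ⟨_, ⟨A, hA, rfl⟩, hmem⟩ := hscott.2 D hne hdir hx0s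
    exact f.sets_of_superset hA fun a ha => hscott.1 (sInf_le ha) hmem
  · by_contra hmem
    have hIci : Set.Ici a ∈ f := (f.mem_or_compl_mem (Set.Ici a)).resolve_right hmem
    exact hx0s (le_sSup ⟨Set.Ici a, hIci, csInf_Ici⟩)

/-- An upper Lawson-open set is Scott-open. -/
lemma upper_lawsonOpen_scottOpen {W : Set X} (hup : IsUpperSet W)
    (hW : @IsOpen X (lawsonTop X) W) : ScottOpen W := by
  letI := lawsonTop X
  refine ⟨hup, fun S hSne hSdir hsup => ?_⟩
  obtain ⟨_, ⟨F, ⟨hFfin, hFsub⟩, rfl⟩, hxF, hFW⟩ :=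
    (isTopologicalBasis_of_subbasis (lawsonTop_eq (X := X))).exists_subset_of_mem_open hsup hW
  have key : ∃ z ∈ S, ∀ m ∈ F, ScottOpen m → z ∈ m := by
    refine Set.Finite.induction_on_subset (motive := fun F' _ => ∃ z ∈ S, ∀ m ∈ F', ScottOpen m → z ∈ m) F hFfin ?_ ?_
    · exact hSne.imp fun z hz => ⟨hz, by simp⟩
    · rintro m F'' hmF - - ⟨z1, hz1S, hz1⟩
      by_cases hms : ScottOpen m
      · have hxm : sSup S ∈ m := hxF m hmF
        obtain ⟨z2, hz2S, hz2m⟩ := hms.2 S hSne hSdir hxm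
        obtain ⟨z, hzS, hz1z, hz2z⟩ := hSdir z1 hz1S z2 hz2S
        refine ⟨z, hzS, fun m' hm' hm's => ?_⟩
        rcases Set.mem_insert_iff.mp hm' with rfl | hm'F
        · exact hm's.1 hz2z hz2m
        · exact hm's.1 hz1z (hz1 m' hm'F hm's)
      · refine ⟨z1, hz1S, fun m' hm' hm's => ?_⟩
        rcases Set.mem_insert_iff.mp hm' with rfl | hm'F
        · exact absurd hm's hms
        · exact hz1 m' hm'F hm's
  obtain ⟨z, hzS, hz⟩ := key
  refine ⟨z, hzS, hFW ?_⟩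
  intro m hm
  by_cases hms : ScottOpen m
  · exact hz m hm hms
  · rcases hFsub hm with h | ⟨a, rfl⟩
    · exact absurd h hms
    · intro hza
      exact hxF _ hm (le_trans hza (le_sSup hzS))

/-- In an algebraic lattice, every member of an open filter is above a compact
member of the filter. -/
lemma exists_compact_mem_le
    (hX : ∀ x : X, x = sSup {k : X | CompleteLattice.IsCompactElement k ∧ k ≤ x})
    {W : Set X} (hWo : @IsOpen X (lawsonTop X) W) (hWf : IsFilterSet W)
    {x : X} (hx : x ∈ W) :
    ∃ k : X, CompleteLattice.IsCompactElement k ∧ k ∈ W ∧ k ≤ x := by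
  have hscott : ScottOpen W := upper_lawsonOpen_scottOpen hWf.2.1 hWo
  set S := {k : X | CompleteLattice.IsCompactElement k ∧ k ≤ x} with hS
  have hne : S.Nonempty := ⟨⊥, bot_isCompactElement, bot_le⟩
  have hdir : DirectedOn (· ≤ ·) S := by
    rintro a ⟨ha, hax⟩ b ⟨hb, hbx⟩
    exact ⟨a ⊔ b, ⟨sup_isCompactElement ha hb, sup_le hax hbx⟩, le_sup_left, le_sup_right⟩
  have hsup : sSup S ∈ W := by rw [← hX x]; exact hx
  obtain ⟨k, ⟨hk, hkx⟩, hkW⟩ := hscott.2 S hne hdir hsup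
  exact ⟨k, hk, hkW, hkx⟩

lemma finsetInf'_mem_filterSet {Z : Type*} [SemilatticeInf Z] {F : Set Z}
    (hF : IsFilterSet F) {ι : Type*} {s : Finset ι} (hs : s.Nonempty) (b : ι → Z)
    (hb : ∀ i ∈ s, b i ∈ F) : s.inf' hs b ∈ F := by
  induction hs using Finset.Nonempty.cons_induction with
  | singleton a => simpa using hb a (by simp)
  | cons a t ha hne ih =>
    rw [Finset.inf'_cons hne]
    exact hF.2.2 _ (hb a (by simp)) _ (ih fun i hi => hb i (by simp [hi]))

/-- A filter contained in a finite union of filters is contained in one of them. -/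
lemma filterSet_subset_of_subset_biUnion {Z : Type*} [SemilatticeInf Z]
    {F : Set Z} (hF : IsFilterSet F) {ι : Type*} (s : Finset ι) (G : ι → Set Z)
    (hG : ∀ i ∈ s, IsFilterSet (G i)) (h : F ⊆ ⋃ i ∈ s, G i) :
    ∃ i ∈ s, F ⊆ G i := by
  classical
  by_contra hcon
  push_neg at hcon
  obtain ⟨c0, hc0⟩ := hF.1
  have hb : ∀ i : ι, ∃ b, i ∈ s → b ∈ F ∧ b ∉ G i := by
    intro i
    by_cases hi : i ∈ s
    · obtain ⟨b, hbF, hbG⟩ := Set.not_subset.mp (hcon i hi)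
      exact ⟨b, fun _ => ⟨hbF, hbG⟩⟩
    · exact ⟨c0, fun h' => absurd h' hi⟩
  choose b hbprop using hb
  have hsne : s.Nonempty := by
    rcases s.eq_empty_or_nonempty with rfl | hsne
    · simpa using h hc0
    · exact hsne
  have hc : s.inf' hsne b ∈ F :=
    finsetInf'_mem_filterSet hF hsne b fun i hi => (hbprop i hi).1
  obtain ⟨G', ⟨i, rfl⟩, hG'⟩ := h hc
  simp only [Set.mem_iUnion, exists_prop] at hG'
  obtain ⟨his, hcGi⟩ := hG'
  exact (hbprop i his).2 ((hG i his).2.1 (Finset.inf'_le b his) hcGi)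

end Aux

/-- For a DH-relation `R` between algebraic lattices `X`, `Y` with their
Lawson topologies: every open filter of `X` has the form `(R⁻¹[y])ᶜ`, and the map
`ν y = (R⁻¹[y])ᶜ` is an order isomorphism from `Y` onto the open filters of `X`. -/
theorem statement_7 {X Y : Type*} [CompleteLattice X] [CompleteLattice Y]
    (hX : ∀ x : X, x = sSup {k : X | CompleteLattice.IsCompactElement k ∧ k ≤ x})
    (hY : ∀ y : Y, y = sSup {k : Y | CompleteLattice.IsCompactElement k ∧ k ≤ y})
    (R : X → Y → Prop)
    (hR : IsDHRel (lawsonTop X) (lawsonTop Y) R) :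
    (∀ W : Set X, @IsOpen X (lawsonTop X) W → IsFilterSet W →
      ∃ y : Y, W = {x : X | R x y}ᶜ) ∧
    (∀ y : Y, @IsOpen X (lawsonTop X) ({x : X | R x y}ᶜ) ∧ IsFilterSet ({x : X | R x y}ᶜ)) ∧
    (Function.Injective fun y : Y => ({x : X | R x y}ᶜ : Set X)) ∧
    (∀ y y' : Y, y ≤ y' ↔ ({x : X | R x y}ᶜ : Set X) ⊆ {x : X | R x y'}ᶜ) := by
  classical
  obtain ⟨hR1, hR2, hR3, hR4, hR5, hR6, hR7, hR8⟩ := hR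
  have hanti : ∀ {x x' : X} {y : Y}, x ≤ x' → R x' y → R x y := by
    intro x x' y hxx h
    by_contra hnot
    exact (hR6 y).2.1 hxx hnot h
  have hlow : ∀ {x : X} {y y' : Y}, y ≤ y' → R x y' → R x y := by
    intro x y y' hyy h
    by_contra hnot
    exact (hR5 x).2.1 hyy hnot h
  have part4 : ∀ y y' : Y, y ≤ y' ↔ ({x : X | R x y}ᶜ : Set X) ⊆ {x : X | R x y'}ᶜ := by
    intro y y'
    constructor
    · intro h x hx hx'
      exact hx (hlow h hx')
    · intro h
      refine hR8 y' y fun x hx => ?_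
      by_contra hnot
      exact h hnot hx
  have part3 : Function.Injective fun y : Y => ({x : X | R x y}ᶜ : Set X) := by
    intro y y' h
    simp only at h
    exact le_antisymm ((part4 y y').mpr (h ▸ subset_rfl))
      ((part4 y' y).mpr (h ▸ subset_rfl))
  have RkClopen : ∀ {k : X}, CompleteLattice.IsCompactElement k →
      @IsClopen Y (lawsonTop Y) {y | R k y} := by
    intro k hk
    have h1 : relImage R (Set.Ici k) = {y | R k y} := by
      ext y
      constructor
      · rintro ⟨x, hx, hxy⟩
        exact hanti hx hxy
      · intro h
        exact ⟨k, le_refl k, h⟩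
    rw [← h1]
    exact hR2 _ (ici_clopen hk)
  have part2 : ∀ y : Y, @IsOpen X (lawsonTop X) ({x : X | R x y}ᶜ) ∧ IsFilterSet ({x : X | R x y}ᶜ) := by
    intro y
    letI := lawsonTop X
    exact ⟨(hR3 y).isOpen_compl, hR6 y⟩
  refine ⟨?_, part2, part3, part4⟩
  intro W hWo hWf
  letI tY := lawsonTop Y
  obtain ⟨w, hw⟩ := hWf.1
  obtain ⟨k0, hk0c, hk0W, -⟩ := exists_compact_mem_le hX hWo hWf hw
  set C : ({k : X // CompleteLattice.IsCompactElement k ∧ k ∈ W} ⊕ {x : X // x ∉ W}) → Set Y :=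
    fun i => Sum.elim (fun k => {y | R k.1 y}ᶜ) (fun x => {y | R x.1 y}) i with hCdef
  have hCclosed : ∀ i, IsClosed (C i) := by
    rintro (k | x)
    · exact (RkClopen k.2.1).2.isClosed_compl
    · exact hR1 x.1
  have hne : (Set.univ ∩ ⋂ i, C i).Nonempty := by
    by_contra hcon
    rw [Set.not_nonempty_iff_eq_empty] at hcon
    obtain ⟨u, hu⟩ := lawson_isCompact_univ.elim_finite_subfamily_closed C hCclosed hcon
    set f : ({k : X // CompleteLattice.IsCompactElement k ∧ k ∈ W} ⊕ {x : X // x ∉ W}) → X :=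
      fun i => Sum.elim (fun k => k.1) (fun _ => (⊤ : X)) i with hfdef
    have htopW : (⊤ : X) ∈ W := hWf.2.1 le_top hk0W
    have hmne : k0 ∈ insert k0 (u.image f) := Finset.mem_insert_self _ _
    have hcW : (insert k0 (u.image f)).inf' ⟨k0, hmne⟩ id ∈ W := by
      refine finsetInf'_mem_filterSet hWf _ _ fun z hz => ?_
      rcases Finset.mem_insert.mp hz with rfl | hz
      · exact hk0W
      · obtain ⟨i, -, rfl⟩ := Finset.mem_image.mp hz
        rcases i with k | x
        · exact k.2.2
        · exact htopW
    obtain ⟨k'', hk''c, hk''W, hk''le⟩ := exists_compact_mem_le hX hWo hWf hcW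
    have hk''k : ∀ (k : {k : X // CompleteLattice.IsCompactElement k ∧ k ∈ W}),
        Sum.inl k ∈ u → k'' ≤ k.1 := by
      intro k hk
      refine hk''le.trans ?_
      exact Finset.inf'_le id (Finset.mem_insert_of_mem (Finset.mem_image_of_mem f hk))
    set u' := u.filter (fun i => i.isRight) with hu'def
    set G : ({k : X // CompleteLattice.IsCompactElement k ∧ k ∈ W} ⊕ {x : X // x ∉ W}) → Set Y :=
      fun i => Sum.elim (fun _ => (∅ : Set Y)) (fun x => {y | R x.1 y}ᶜ) i with hGdef
    have hGfilter : ∀ i ∈ u', IsFilterSet (G i) := by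
      rintro (k | x) hi
      · simp [hu'def, Finset.mem_filter] at hi
      · exact hR5 x.1
    have hnotsub : ¬ ({y | R k'' y}ᶜ ⊆ ⋃ i ∈ u', G i) := by
      intro hsub
      obtain ⟨i, hiu', hisub⟩ := filterSet_subset_of_subset_biUnion (hR5 k'') u' G hGfilter hsub
      rcases i with k | x
      · simp [hu'def, Finset.mem_filter] at hiu'
      · have hsub2 : {y | R x.1 y} ⊆ {y | R k'' y} := by
          intro y hy
          by_contra hnot
          exact hisub hnot hy
        exact x.2 (hWf.2.1 (hR7 x.1 k'' hsub2) hk''W)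
    obtain ⟨y, hy1, hy2⟩ := Set.not_subset.mp hnotsub
    have hymem : y ∈ Set.univ ∩ ⋂ i ∈ u, C i := by
      refine ⟨Set.mem_univ y, Set.mem_iInter₂.mpr ?_⟩
      rintro (k | x) hi
      · intro hRy
        exact hy1 (hanti (hk''k k hi) hRy)
      · by_contra hnot
        exact hy2 (Set.mem_iUnion₂.mpr ⟨Sum.inr x, by simp [hu'def, Finset.mem_filter, hi], hnot⟩)
    rw [hu] at hymem
    exact Set.notMem_empty y hymem
  obtain ⟨y, -, hy⟩ := hne
  rw [Set.mem_iInter] at hy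
  refine ⟨y, ?_⟩
  ext x
  constructor
  · intro hxW hRxy
    obtain ⟨k, hkc, hkW, hkx⟩ := exists_compact_mem_le hX hWo hWf hxW
    exact hy (Sum.inl ⟨k, hkc, hkW⟩) (hanti hkx hRxy)
  · intro hx
    by_contra hxW
    exact hx (hy (Sum.inr ⟨x, hxW⟩))
end

section
/- Let X be an algebraic lattice equipped with its Scott topology. A subset F ⊆ X is a compact open filter — i.e. F is nonempty, for all x, y ∈ F there is z ∈ F with z ≤ x and z ≤ y, F is open, and F is compact as a topological subspace — if and only if F = ↑k = {x : k ≤ x} for some compact element k of X. -/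
/-- The Scott topology on a complete lattice. -/
def scottTop (X : Type*) [CompleteLattice X] : TopologicalSpace X :=
  TopologicalSpace.generateFrom {U : Set X | ScottOpen U}

lemma scottTop_isOpen_iff {X : Type*} [CompleteLattice X] {U : Set X} :
    @IsOpen X (scottTop X) U ↔ ScottOpen U := by
  constructor
  · intro h
    induction h with
    | basic V hV => exact hV
    | univ =>
      exact ⟨isUpperSet_univ, fun S hS _ _ => by simpa using hS⟩
    | inter U V _ _ hU hV =>
      refine ⟨hU.1.inter hV.1, fun S hS hdir hmem => ?_⟩
      obtain ⟨u, huS, huU⟩ := hU.2 S hS hdir hmem.1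
      obtain ⟨v, hvS, hvV⟩ := hV.2 S hS hdir hmem.2
      obtain ⟨z, hzS, hz1, hz2⟩ := hdir u huS v hvS
      exact ⟨z, hzS, hU.1 hz1 huU, hV.1 hz2 hvV⟩
    | sUnion 𝒮 _ ih =>
      refine ⟨fun a b hab ha => ?_, fun S hS hdir hmem => ?_⟩
      · obtain ⟨V, hV, haV⟩ := ha
        exact ⟨V, hV, (ih V hV).1 hab haV⟩
      · obtain ⟨V, hV, hmemV⟩ := hmem
        obtain ⟨z, hzS, hzV⟩ := (ih V hV).2 S hS hdir hmemV
        exact ⟨z, hzS, V, hV, hzV⟩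
  · exact fun h => TopologicalSpace.GenerateOpen.basic U h

lemma isCompactElement_sup {X : Type*} [CompleteLattice X] {c d : X}
    (hc : IsCompactElement c) (hd : IsCompactElement d) :
    IsCompactElement (c ⊔ d) := by
  rw [CompleteLattice.isCompactElement_iff_le_of_directed_sSup_le] at hc hd ⊢
  intro S hS hdir hle
  obtain ⟨x, hxS, hcx⟩ := hc S hS hdir (le_trans le_sup_left hle)
  obtain ⟨y, hyS, hdy⟩ := hd S hS hdir (le_trans le_sup_right hle)
  obtain ⟨z, hzS, hz1, hz2⟩ := hdir x hxS y hyS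
  exact ⟨z, hzS, sup_le (hcx.trans hz1) (hdy.trans hz2)⟩

lemma isCompactElement_bot {X : Type*} [CompleteLattice X] :
    IsCompactElement (⊥ : X) := by
  rw [CompleteLattice.isCompactElement_iff_le_of_directed_sSup_le]
  intro S hS _ _
  obtain ⟨x, hx⟩ := hS
  exact ⟨x, hx, bot_le⟩

/-- In an algebraic lattice with its Scott topology, the compact open
filters (nonempty downward-directed open compact sets) are exactly the principal upsets
`↑k` of compact elements `k`. -/
theorem statement_18 {X : Type*} [CompleteLattice X]
    (halg : ∀ x : X, x = sSup {k : X | IsCompactElement k ∧ k ≤ x})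
    (F : Set X) :
    (F.Nonempty ∧ (∀ x ∈ F, ∀ y ∈ F, ∃ z ∈ F, z ≤ x ∧ z ≤ y) ∧
      @IsOpen X (scottTop X) F ∧ @IsCompact X (scottTop X) F) ↔
    ∃ k : X, IsCompactElement k ∧ F = Set.Ici k := by
  constructor
  · rintro ⟨hne, hfil, hopen, hcpt⟩
    rw [scottTop_isOpen_iff] at hopen
    -- every x ∈ F has a compact element of F below it
    have key : ∀ x ∈ F, ∃ c, IsCompactElement c ∧ c ∈ F ∧ c ≤ x := by
      intro x hx
      set C := {k : X | IsCompactElement k ∧ k ≤ x} with hC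
      have hCne : C.Nonempty := ⟨⊥, isCompactElement_bot, bot_le⟩
      have hCdir : DirectedOn (· ≤ ·) C := by
        rintro a ⟨ha, hax⟩ b ⟨hb, hbx⟩
        exact ⟨a ⊔ b, ⟨isCompactElement_sup ha hb, sup_le hax hbx⟩, le_sup_left, le_sup_right⟩
      have hx' : sSup C ∈ F := by rw [← halg x]; exact hx
      obtain ⟨c, ⟨hcc, hcx⟩, hcF⟩ := hopen.2 C hCne hCdir hx'
      exact ⟨c, hcc, hcF, hcx⟩
    -- cover F by Ici c for compact c ∈ F
    have hIciOpen : ∀ c : X, IsCompactElement c →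
        @IsOpen X (scottTop X) (Set.Ici c) := by
      intro c hc
      rw [scottTop_isOpen_iff]
      refine ⟨fun a b hab ha => le_trans ha hab, fun S hS hdir hmem => ?_⟩
      rw [CompleteLattice.isCompactElement_iff_le_of_directed_sSup_le] at hc
      obtain ⟨z, hzS, hcz⟩ := hc S hS hdir hmem
      exact ⟨z, hzS, hcz⟩
    set ι := {c : X // IsCompactElement c ∧ c ∈ F}
    have hcover : F ⊆ ⋃ c : ι, Set.Ici c.1 := by
      intro x hx
      obtain ⟨c, hcc, hcF, hcx⟩ := key x hx
      exact Set.mem_iUnion.2 ⟨⟨c, hcc, hcF⟩, hcx⟩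
    obtain ⟨t, ht⟩ := @IsCompact.elim_finite_subcover X (scottTop X) F ι hcpt
      (fun c : ι => Set.Ici c.1) (fun c => hIciOpen c.1 c.2.1) hcover
    -- find a lower bound in F of all elements of t
    have hlb : ∀ s : Finset ι, ∃ z ∈ F, ∀ c ∈ s, z ≤ c.1 := by
      intro s
      classical
      induction s using Finset.induction_on with
      | empty => obtain ⟨x, hx⟩ := hne; exact ⟨x, hx, by simp⟩
      | insert a s' hni ih =>
        obtain ⟨z, hzF, hz⟩ := ih
        obtain ⟨w, hwF, hw1, hw2⟩ := hfil z hzF a.1 a.2.2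
        refine ⟨w, hwF, fun c hc => ?_⟩
        rcases Finset.mem_insert.1 hc with h | h
        · exact h ▸ hw2
        · exact hw1.trans (hz c h)
    obtain ⟨z, hzF, hz⟩ := hlb t
    obtain ⟨c, hct, hcz⟩ := Set.mem_iUnion₂.1 (ht hzF)
    have hzc : z = c.1 := le_antisymm (hz c hct) hcz
    refine ⟨z, hzc ▸ c.2.1, Set.Subset.antisymm ?_ ?_⟩
    · intro x hx
      obtain ⟨d, hdt, hdx⟩ := Set.mem_iUnion₂.1 (ht hx)
      exact (hz d hdt).trans hdx
    · intro x hx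
      exact hopen.1 hx hzF
  · rintro ⟨k, hk, rfl⟩
    refine ⟨⟨k, le_refl k⟩, fun x _ y _ => ⟨k, le_refl k, ‹k ≤ x›, ‹k ≤ y›⟩, ?_, ?_⟩
    · rw [scottTop_isOpen_iff]
      refine ⟨fun a b hab ha => le_trans ha hab, fun S hS hdir hmem => ?_⟩
      rw [CompleteLattice.isCompactElement_iff_le_of_directed_sSup_le] at hk
      obtain ⟨z, hzS, hkz⟩ := hk S hS hdir hmem
      exact ⟨z, hzS, hkz⟩
    · refine @isCompact_of_finite_subcover X (scottTop X) (Set.Ici k) fun {ι} U hU hcov => ?_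
      obtain ⟨i, hki⟩ := Set.mem_iUnion.1 (hcov (le_refl k))
      refine ⟨{i}, fun x hx => ?_⟩
      have hup : IsUpperSet (U i) := (scottTop_isOpen_iff.1 (hU i)).1
      simpa using hup hx hki
end
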